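/- Intuitionistic propositional logic is not an n-valued logic for any finite n: there is no finite-valued truth-table semantics (with designated value) whose tautologies are exactly the intuitionistically valid formulas, provided (p → p) ∨ q is intuitionistically valid (which it is). -/

import Mathlib

inductive Fm (α : Type) : Type where
  | top  : Fm α
  | atom : α → Fm α
  | neg  : Fm α → Fm α
  | and  : Fm α → Fm α → Fm α
  | or   : Fm α → Fm α → Fm α
  | imp  : Fm α → Fm α → Fm α

structure KripkeModel (α : Type) : Type 1 where
  K : Type
  le : K → K → Prop
  refl : ∀ k, le k k
  trans : ∀ {a b c}, le a b → le b c → le a c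
  antisymm : ∀ {a b}, le a b → le b a → a = b
  val : K → α → Prop
  persist : ∀ {k k' p}, le k k' → val k p → val k' p

def force {α : Type} (M : KripkeModel α) : M.K → Fm α → Prop
  | _, .top => True
  | k, .atom p => M.val k p
  | k, .neg φ => ∀ k', M.le k k' → ¬ force M k' φ
  | k, .and φ ψ => force M k φ ∧ force M k ψ
  | k, .or φ ψ => force M k φ ∨ force M k ψ
  | k, .imp φ ψ => ∀ k', M.le k k' → force M k' φ → force M k' ψ

/-- A many-valued truth table: a designated value and operations for the connectives. -/
structure MVLogic (V : Type) where
  tau : V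
  mneg : V → V
  mand : V → V → V
  mor  : V → V → V
  mimp : V → V → V

/-- Homomorphic extension of a valuation of the atoms to all formulas. -/
def MVLogic.eval {V α : Type} (L : MVLogic V) (ν : α → V) : Fm α → V
  | .top => L.tau
  | .atom p => ν p
  | .neg φ => L.mneg (L.eval ν φ)
  | .and φ ψ => L.mand (L.eval ν φ) (L.eval ν ψ)
  | .or φ ψ => L.mor (L.eval ν φ) (L.eval ν ψ)
  | .imp φ ψ => L.mimp (L.eval ν φ) (L.eval ν ψ)

/-- Intuitionistic validity: being forced at every node of every finite Kripke model. -/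
def IValid (φ : Fm ℕ) : Prop :=
  ∀ (M : KripkeModel ℕ), Fintype M.K → ∀ k : M.K, force M k φ

/-!
Under a valuation into a table with fewer than `n` values, two of the atoms `p_0, …, p_{n-1}`
get the same value, so renaming one into the other does not change the value of
`⋁_{i ≠ j} (p_i → p_j)`; the renamed disjunction contains `p_a → p_a`, hence is
intuitionistically valid, hence a tautology of the table. Yet the disjunction is refuted at the
root of a Kripke model with `n` leaves above it, where leaf `j` forces every atom except `p_j`.
-/

namespace Fm

variable {α β : Type}

def rename (σ : α → β) : Fm α → Fm β
  | .top => .top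
  | .atom p => .atom (σ p)
  | .neg φ => .neg (φ.rename σ)
  | .and φ ψ => .and (φ.rename σ) (ψ.rename σ)
  | .or φ ψ => .or (φ.rename σ) (ψ.rename σ)
  | .imp φ ψ => .imp (φ.rename σ) (ψ.rename σ)

def bot : Fm α := .neg .top

def bigOr (l : List (Fm α)) : Fm α := l.foldr .or bot

theorem rename_bigOr (σ : α → β) (l : List (Fm α)) :
    (bigOr l).rename σ = bigOr (l.map (rename σ)) := by
  induction l with
  | nil => rfl
  | cons φ l ih => exact congrArg (Fm.or (φ.rename σ)) ih

end Fm

open Fm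

theorem MVLogic.eval_rename {V α β : Type} (L : MVLogic V) (ν : β → V) (σ : α → β) (φ : Fm α) :
    L.eval ν (φ.rename σ) = L.eval (ν ∘ σ) φ := by
  induction φ <;> simp_all [rename, MVLogic.eval]

def MVLogic.IsTautology {V : Type} (L : MVLogic V) (φ : Fm ℕ) : Prop :=
  ∀ ν : ℕ → V, L.eval ν φ = L.tau

section Kripke

variable {α : Type} {M : KripkeModel α} {k : M.K}

theorem not_force_bot : ¬ force M k bot :=
  fun h => h k (M.refl k) trivial

theorem force_bigOr {l : List (Fm α)} : force M k (bigOr l) ↔ ∃ φ ∈ l, force M k φ := by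
  induction l with
  | nil => simpa [bigOr] using not_force_bot
  | cons φ l ih => simp [bigOr, force, ← ih]

theorem force_imp_self (φ : Fm α) : force M k (.imp φ φ) :=
  fun _ _ h => h

end Kripke

theorem IValid.bigOr_of_mem {l : List (Fm ℕ)} {φ : Fm ℕ} (hφ : φ ∈ l) (h : IValid φ) :
    IValid (bigOr l) :=
  fun M _ k => force_bigOr.2 ⟨φ, hφ, h M ‹_› k⟩

def pigeonFm (n : ℕ) : Fm ℕ :=
  bigOr ((List.range n).offDiag.map fun p => .imp (.atom p.1) (.atom p.2))

theorem mem_offDiag_range {n : ℕ} {p : ℕ × ℕ} :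
    p ∈ (List.range n).offDiag ↔ p.1 < n ∧ p.2 < n ∧ p.1 ≠ p.2 := by
  rcases p with ⟨i, j⟩
  simp only [List.mem_offDiag_iff_getElem, List.length_range, List.getElem_range]
  constructor
  · rintro ⟨i, hi, j, hj, hij, rfl, rfl⟩; exact ⟨hi, hj, hij⟩
  · rintro ⟨hi, hj, hij⟩; exact ⟨i, hi, j, hj, hij, rfl, rfl⟩

theorem MVLogic.isTautology_pigeonFm {V : Type} [Fintype V] (L : MVLogic V)
    (hL : ∀ φ, IValid φ → L.IsTautology φ) {n : ℕ} (hn : Fintype.card V < n) :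
    L.IsTautology (pigeonFm n) := by
  intro ν
  obtain ⟨a, b, hab, hν⟩ := Fintype.exists_ne_map_eq_of_card_lt (fun i : Fin n => ν i)
    (by simpa using hn)
  let σ : ℕ → ℕ := fun m => if m = b then a else m
  have hνσ : ν ∘ σ = ν := by
    funext m; by_cases hm : m = (b : ℕ) <;> simp [σ, hm, hν]
  have hvalid : IValid ((pigeonFm n).rename σ) := by
    rw [pigeonFm, rename_bigOr, List.map_map]
    refine IValid.bigOr_of_mem (φ := .imp (.atom a) (.atom a)) ?_ (fun _ _ _ => force_imp_self _)
    rw [List.mem_map]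
    refine ⟨(a, b), mem_offDiag_range.2 ⟨a.2, b.2, Fin.val_ne_of_ne hab⟩, ?_⟩
    simp [rename, σ, Fin.val_ne_of_ne hab]
  rw [← hνσ, ← L.eval_rename]
  exact hL _ hvalid ν

def fanModel (n : ℕ) : KripkeModel ℕ where
  K := Option (Fin n)
  le a b := a = b ∨ a = none
  refl _ := Or.inl rfl
  trans := by rintro a b c (rfl | rfl) (rfl | rfl) <;> simp
  antisymm := by rintro a b (rfl | rfl) (h | h) <;> simp_all
  val k p := ∃ j : Fin n, k = some j ∧ p ≠ j
  persist := by
    rintro k k' p (rfl | rfl) h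
    · exact h
    · obtain ⟨j, hj, _⟩ := h; cases hj

theorem not_force_fanModel_pigeonFm (n : ℕ) : ¬ force (fanModel n) none (pigeonFm n) := by
  intro h
  obtain ⟨_, hmem, hforce⟩ := force_bigOr.1 h
  obtain ⟨⟨i, j⟩, hij, rfl⟩ := List.mem_map.1 hmem
  obtain ⟨-, hj, hne⟩ := mem_offDiag_range.1 hij
  obtain ⟨j', hj', hjj'⟩ := hforce (some ⟨j, hj⟩) (Or.inr rfl) ⟨⟨j, hj⟩, rfl, hne⟩
  cases hj'
  exact hjj' rfl

theorem not_IValid_pigeonFm (n : ℕ) : ¬ IValid (pigeonFm n) :=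
  fun h => not_force_fanModel_pigeonFm n
    (h (fanModel n) (inferInstanceAs (Fintype (Option _))) none)

theorem IPL_not_finitely_valued :
    ¬ ∃ (V : Type) (_ : Fintype V) (L : MVLogic V),
        ∀ φ : Fm ℕ, IValid φ ↔ (∀ ν : ℕ → V, L.eval ν φ = L.tau) := by
  rintro ⟨V, _, L, h⟩
  have hL : ∀ φ, IValid φ → L.IsTautology φ := fun φ => (h φ).1
  exact not_IValid_pigeonFm _ ((h _).2 (L.isTautology_pigeonFm hL (Nat.lt_succ_self _)))
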